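/- Let a: [r₀, ∞) → ℝ be nondecreasing, positive, differentiable, with r·a'(r) ≤ (n + λ²/4)·a(r) + b(r) for an auxiliary nonnegative term b, and suppose more precisely (as for λ-hypersurfaces) that for r₁ > r₂ ≥ r₀: r₁^{-n-λ²/4} a(r₁) - r₂^{-n-λ²/4} a(r₂) ≤ (2n+λ²)(r₁^{-n-2-λ²/4} + r₂^{-n-2-λ²/4}) a(r₁). Then with r₁ = t+1, r₂ = t, one gets (1 - 2(2n+λ²)(t+1)^{n+λ²/4}/t^{n+2+λ²/4})·a(t+1) ≤ a(t)·((t+1)/t)^{n+λ²/4}; in particular there exist constants C₁(n,λ) and c(n,λ) such that for all t ≥ C₁(n,λ): a(t+1) - a(t) ≤ c(n,λ)·a(t)/t and a(t+1) ≤ 2a(t). -/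

import Mathlib

/-!
Since `(t+1)^(-α-2) ≤ t^(-α-2)` and `a (t+1) > 0`, the hypothesis gives
`(t+1)^(-α) a(t+1) - t^(-α) a(t) ≤ 2K t^(-α-2) a(t+1)`; multiplying by `(t+1)^α` is the first claim.
For the asymptotics put `m = ⌈α⌉₊` and `x = 1/t ≤ 1`: convexity of `s ↦ s^m` on `[1, 2]` gives
`((t+1)/t)^α ≤ (1+x)^m ≤ 1 + (2^m - 1) x`. Hence both the defect `2K(t+1)^α / t^(α+2)` and
`((t+1)/t)^α - 1` are `O(1/t)`, and once they are at most `1/4` the first claim yields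
`a(t+1) ≤ 2 a(t)` and `a(t+1) - a(t) = O(a(t)/t)`.
-/

open Real

lemma one_add_pow_le_one_add_mul {x : ℝ} (hx₀ : 0 ≤ x) (hx₁ : x ≤ 1) (m : ℕ) :
    (1 + x) ^ m ≤ 1 + (2 ^ m - 1) * x := by
  induction m with
  | zero => simp
  | succ k ih =>
    have h2k : (1 : ℝ) ≤ 2 ^ k := one_le_pow₀ one_le_two
    have hxx : x * x ≤ x := mul_le_of_le_one_right hx₀ hx₁
    calc (1 + x) ^ (k + 1) = (1 + x) ^ k * (1 + x) := pow_succ _ _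
      _ ≤ (1 + (2 ^ k - 1) * x) * (1 + x) := by gcongr
      _ ≤ 1 + (2 ^ (k + 1) - 1) * x := by rw [pow_succ]; nlinarith

lemma one_add_rpow_le_one_add_mul {x : ℝ} (hx₀ : 0 ≤ x) (hx₁ : x ≤ 1) (α : ℝ) :
    (1 + x) ^ α ≤ 1 + (2 ^ ⌈α⌉₊ - 1) * x :=
  calc (1 + x) ^ α ≤ (1 + x) ^ (⌈α⌉₊ : ℝ) :=
        rpow_le_rpow_of_exponent_le (by linarith) (Nat.le_ceil α)
    _ = (1 + x) ^ ⌈α⌉₊ := rpow_natCast _ _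
    _ ≤ 1 + (2 ^ ⌈α⌉₊ - 1) * x := one_add_pow_le_one_add_mul hx₀ hx₁ _

lemma add_one_div_self_rpow_le {t : ℝ} (ht : 1 ≤ t) (α : ℝ) :
    ((t + 1) / t) ^ α ≤ 1 + (2 ^ ⌈α⌉₊ - 1) / t := by
  have ht₀ : 0 < t := by linarith
  have hinv : 1 / t ≤ 1 := by rw [div_le_one ht₀]; exact ht
  calc ((t + 1) / t) ^ α = (1 + 1 / t) ^ α := by rw [add_div, div_self ht₀.ne']
    _ ≤ 1 + (2 ^ ⌈α⌉₊ - 1) * (1 / t) := one_add_rpow_le_one_add_mul (by positivity) hinv α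
    _ = 1 + (2 ^ ⌈α⌉₊ - 1) / t := by ring

lemma add_one_rpow_le {t : ℝ} (ht : 1 ≤ t) (α : ℝ) :
    (t + 1) ^ α ≤ 2 ^ ⌈α⌉₊ * t ^ α := by
  have ht₀ : 0 < t := by linarith
  calc (t + 1) ^ α = ((t + 1) / t) ^ α * t ^ α := by
        rw [div_rpow (by linarith) ht₀.le, div_mul_cancel₀ _ (rpow_pos_of_pos ht₀ α).ne']
    _ ≤ (1 + (2 ^ ⌈α⌉₊ - 1) / t) * t ^ α := by gcongr; exact add_one_div_self_rpow_le ht α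
    _ ≤ 2 ^ ⌈α⌉₊ * t ^ α := by
        gcongr
        have h2 : (1 : ℝ) ≤ 2 ^ ⌈α⌉₊ := one_le_pow₀ one_le_two
        linarith [div_le_self (by linarith : (0 : ℝ) ≤ 2 ^ ⌈α⌉₊ - 1) ht]

lemma doubling_defect_le {K t : ℝ} (hK : 0 ≤ K) (ht : 1 ≤ t) (α : ℝ) :
    2 * K * (t + 1) ^ α / t ^ (α + 2) ≤ 2 * 2 ^ ⌈α⌉₊ * K / t := by
  have ht₀ : 0 < t := by linarith
  have htα : 0 < t ^ α := rpow_pos_of_pos ht₀ α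
  rw [rpow_add ht₀, rpow_two, div_le_div_iff₀ (by positivity) ht₀]
  calc 2 * K * (t + 1) ^ α * t ≤ 2 * K * (2 ^ ⌈α⌉₊ * t ^ α) * t := by
        gcongr; exact add_one_rpow_le ht α
    _ ≤ 2 * 2 ^ ⌈α⌉₊ * K * (t ^ α * t ^ 2) := by
        have : 2 * K * 2 ^ ⌈α⌉₊ * t ^ α * t * 1 ≤ 2 * K * 2 ^ ⌈α⌉₊ * t ^ α * t * t := by gcongr
        nlinarith

lemma one_sub_mul_le_mul_rpow_of_rpow_neg_sub_le {K α t x y : ℝ} (hK : 0 ≤ K) (hα : -2 ≤ α)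
    (ht : 0 < t) (hy : 0 ≤ y)
    (h : (t + 1) ^ (-α) * y - t ^ (-α) * x ≤ K * ((t + 1) ^ (-α - 2) + t ^ (-α - 2)) * y) :
    (1 - 2 * K * (t + 1) ^ α / t ^ (α + 2)) * y ≤ x * ((t + 1) / t) ^ α := by
  have ht₁ : 0 < t + 1 := by linarith
  have hmono : (t + 1) ^ (-α - 2) ≤ t ^ (-α - 2) :=
    rpow_le_rpow_of_nonpos ht (by linarith) (by linarith)
  have hstep : (t + 1) ^ (-α) * y - 2 * K * t ^ (-α - 2) * y ≤ t ^ (-α) * x := by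
    nlinarith [mul_le_mul_of_nonneg_left hmono (mul_nonneg hK hy)]
  have hP : 0 < (t + 1) ^ α := rpow_pos_of_pos ht₁ α
  have hQ : 0 < t ^ α := rpow_pos_of_pos ht α
  rw [rpow_neg ht₁.le, rpow_neg ht.le, show -α - 2 = -(α + 2) by ring, rpow_neg ht.le,
    rpow_add ht, rpow_two] at hstep
  rw [rpow_add ht, rpow_two, div_rpow ht₁.le ht.le]
  calc (1 - 2 * K * (t + 1) ^ α / (t ^ α * t ^ 2)) * y
      = (t + 1) ^ α * (((t + 1) ^ α)⁻¹ * y - 2 * K * (t ^ α * t ^ 2)⁻¹ * y) := by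
        field_simp
    _ ≤ (t + 1) ^ α * ((t ^ α)⁻¹ * x) := by gcongr
    _ = x * ((t + 1) ^ α / t ^ α) := by field_simp

lemma sub_le_and_le_two_mul_of_one_sub_mul_le {t x y ε R B D : ℝ} (ht : 0 < t) (hx : 0 < x)
    (hy : 0 ≤ y) (h : (1 - ε) * y ≤ x * R) (hε₀ : 0 ≤ ε) (hε : ε ≤ D / t)
    (hR : R ≤ 1 + (B - 1) / t) (hD : 4 * D ≤ t) (hB : 4 * B ≤ t) :
    y - x ≤ (B + 2 * D) * x / t ∧ y ≤ 2 * x := by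
  have hε₄ : ε ≤ 1 / 4 := hε.trans (by rw [div_le_iff₀ ht]; linarith)
  have hR₄ : R ≤ 5 / 4 :=
    hR.trans (by linarith [(div_le_iff₀ ht).2 (by linarith : B - 1 ≤ 1 / 4 * t)])
  have hy₂ : y ≤ 2 * x := by nlinarith [mul_le_mul_of_nonneg_left hR₄ hx.le]
  refine ⟨?_, hy₂⟩
  have hDt : 0 ≤ D / t := hε₀.trans hε
  calc y - x ≤ ε * y + (R - 1) * x := by linarith
    _ ≤ D / t * (2 * x) + (B - 1) / t * x := by
        gcongr
        linarith
    _ ≤ (B + 2 * D) * x / t := by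
        rw [div_mul_eq_mul_div, div_mul_eq_mul_div, ← add_div]
        gcongr
        linarith

theorem area_doubling_growth_lemma_general
    (n : ℕ) (lam r₀ : ℝ) (a : ℝ → ℝ)
    (ha_pos : ∀ t : ℝ, r₀ ≤ t → 0 < a t)
    (hineq : ∀ t : ℝ, r₀ ≤ t →
      (t+1) ^ (-((n:ℝ) + lam^2/4)) * a (t+1) - t ^ (-((n:ℝ) + lam^2/4)) * a t
        ≤ (2*(n:ℝ) + lam^2) * ((t+1) ^ (-((n:ℝ) + lam^2/4) - 2)
            + t ^ (-((n:ℝ) + lam^2/4) - 2)) * a (t+1)) :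
    (∀ t : ℝ, max r₀ 1 ≤ t →
      (1 - 2*(2*(n:ℝ) + lam^2) * (t+1) ^ ((n:ℝ) + lam^2/4) / t ^ ((n:ℝ) + lam^2/4 + 2))
          * a (t+1)
        ≤ a t * ((t+1)/t) ^ ((n:ℝ) + lam^2/4)) ∧
    ∃ C₁ c : ℝ, 0 < c ∧ ∀ t : ℝ, C₁ ≤ t →
      a (t+1) - a t ≤ c * a t / t ∧ a (t+1) ≤ 2 * a t := by
  set α : ℝ := (n:ℝ) + lam^2/4
  set K : ℝ := 2*(n:ℝ) + lam^2
  have hα : 0 ≤ α := by positivity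
  have hK : 0 ≤ K := by positivity
  have hstep : ∀ t : ℝ, max r₀ 1 ≤ t →
      (1 - 2*K*(t+1)^α / t^(α+2)) * a (t+1) ≤ a t * ((t+1)/t)^α := fun t ht =>
    one_sub_mul_le_mul_rpow_of_rpow_neg_sub_le hK (by linarith)
      (by linarith [le_max_right r₀ 1]) (ha_pos _ (by linarith [le_max_left r₀ 1])).le
      (hineq t (le_of_max_le_left ht))
  set B : ℝ := 2 ^ ⌈α⌉₊
  have hB : 1 ≤ B := one_le_pow₀ one_le_two
  refine ⟨hstep, max r₀ (max (4 * (2 * B * K)) (4 * B)), B + 2 * (2 * B * K), by positivity,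
    fun t ht => ?_⟩
  have htr : r₀ ≤ t := le_of_max_le_left ht
  have htD : 4 * (2 * B * K) ≤ t := (le_max_left _ _).trans (le_of_max_le_right ht)
  have htB : 4 * B ≤ t := (le_max_right _ _).trans (le_of_max_le_right ht)
  have ht₁ : 1 ≤ t := by linarith
  refine sub_le_and_le_two_mul_of_one_sub_mul_le (by linarith) (ha_pos t htr)
    (ha_pos _ (by linarith)).le (hstep t (max_le htr ht₁)) ?_ (doubling_defect_le hK ht₁ α)
    (add_one_div_self_rpow_le ht₁ α) htD htB
  positivity

/-- Analytic growth lemma (with `α = n + λ²/4` and `K = 2n + λ²`): if a positive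
nondecreasing function `a` satisfies
`(t+1)^{-α}a(t+1) - t^{-α}a(t) ≤ K((t+1)^{-α-2} + t^{-α-2})a(t+1)` for all `t ≥ r₀`,
then `(1 - 2K(t+1)^α/t^{α+2})·a(t+1) ≤ a(t)·((t+1)/t)^α` for `t ≥ max r₀ 1`, and there
exist constants `C₁(n,λ)`, `c(n,λ)` with `a(t+1) - a(t) ≤ c·a(t)/t` and
`a(t+1) ≤ 2a(t)` for all `t ≥ C₁`. -/
theorem area_doubling_growth_lemma
    (n : ℕ) (lam r₀ : ℝ) (hr₀ : 0 < r₀) (a : ℝ → ℝ)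
    (ha_pos : ∀ t : ℝ, r₀ ≤ t → 0 < a t)
    (ha_mono : ∀ s t : ℝ, r₀ ≤ s → s ≤ t → a s ≤ a t)
    (hineq : ∀ t : ℝ, r₀ ≤ t →
      (t+1) ^ (-((n:ℝ) + lam^2/4)) * a (t+1) - t ^ (-((n:ℝ) + lam^2/4)) * a t
        ≤ (2*(n:ℝ) + lam^2) * ((t+1) ^ (-((n:ℝ) + lam^2/4) - 2)
            + t ^ (-((n:ℝ) + lam^2/4) - 2)) * a (t+1)) :
    (∀ t : ℝ, max r₀ 1 ≤ t →
      (1 - 2*(2*(n:ℝ) + lam^2) * (t+1) ^ ((n:ℝ) + lam^2/4) / t ^ ((n:ℝ) + lam^2/4 + 2))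
          * a (t+1)
        ≤ a t * ((t+1)/t) ^ ((n:ℝ) + lam^2/4)) ∧
    ∃ C₁ c : ℝ, 0 < c ∧ ∀ t : ℝ, C₁ ≤ t →
      a (t+1) - a t ≤ c * a t / t ∧ a (t+1) ≤ 2 * a t :=
  area_doubling_growth_lemma_general n lam r₀ a ha_pos hineq
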